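/- Let G be a graph, H a subgraph, and P = (u₀, …, u_k) a path in G with u₀ ∈ V(H). Then the K-projection of P (with respect to the dominated torso K of H in G) is a walk in K starting at u₀. -/

import Mathlib

/-- A ray in `G`: a one-way infinite path. -/
def IsRay {V : Type*} (G : SimpleGraph V) (f : ℕ → V) : Prop :=
  Function.Injective f ∧ ∀ n, G.Adj (f n) (f (n + 1))

/-- `F` separates `U` from `S` in `G`: every path (walk) from a vertex of `U`
to a vertex of `S` meets `F`. -/
def Separates {V : Type*} (G : SimpleGraph V) (F U S : Set V) : Prop :=
  ∀ u ∈ U, ∀ s ∈ S, ∀ p : G.Walk u s, ∃ x ∈ p.support, x ∈ F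

/-- `U` is dispersed in `G`: every ray can be separated from `U` by a finite vertex set. -/
def Dispersed {V : Type*} (G : SimpleGraph V) (U : Set V) : Prop :=
  ∀ f : ℕ → V, IsRay G f → ∃ F : Set V, F.Finite ∧ Separates G F U (Set.range f)

/-- `v` is reachable from `u` by a walk avoiding `H` entirely. -/
def ReachOutside {V : Type*} (G : SimpleGraph V) (H : Set V) (u v : V) : Prop :=
  ∃ p : G.Walk u v, ∀ x ∈ p.support, x ∉ H

/-- `D` is a connected component of `G − H` (the induced subgraph on `V(G) \ H`). -/
def IsComp {V : Type*} (G : SimpleGraph V) (H D : Set V) : Prop :=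
  D.Nonempty ∧ ∀ u ∈ D, ∀ v : V, (v ∈ D ↔ v ∉ H ∧ ReachOutside G H u v)

/-- The neighborhood `N_G(D)`: vertices outside `D` adjacent in `G` to a vertex of `D`. -/
def nbhdOf {V : Type*} (G : SimpleGraph V) (D : Set V) : Set V :=
  {v | v ∉ D ∧ ∃ d ∈ D, G.Adj v d}

/-- `H` has finite adhesion in `G`: every component of `G − H` has finite neighborhood. -/
def FiniteAdhesion {V : Type*} (G : SimpleGraph V) (H : Set V) : Prop :=
  ∀ D : Set V, IsComp G H D → (nbhdOf G D).Finite

/-- The component of `G − H` containing `u` (for `u ∉ H`). -/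
def compOf {V : Type*} (G : SimpleGraph V) (H : Set V) (u : V) : Set V :=
  {v | v ∉ H ∧ ReachOutside G H u v}

/-- `𝒟′`: components of `G − H` whose adhesion set is shared by only finitely
many components. -/
def Dfin {V : Type*} (G : SimpleGraph V) (H : Set V) : Set (Set V) :=
  {D | IsComp G H D ∧ {D' | IsComp G H D' ∧ nbhdOf G D' = nbhdOf G D}.Finite}

/-- `𝒟″`: components of `G − H` whose adhesion set is shared by infinitely
many components. -/
def Dinf {V : Type*} (G : SimpleGraph V) (H : Set V) : Set (Set V) :=
  {D | IsComp G H D ∧ ¬ {D' | IsComp G H D' ∧ nbhdOf G D' = nbhdOf G D}.Finite}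

/-- `η` is an admissible contraction map: each `D ∈ 𝒟″` is contracted onto a vertex
`η D ∈ N_G(D)`, and for every `D ∈ 𝒟″` the map `η` restricted to the components
sharing the adhesion set `N_G(D)` surjects onto `N_G(D)`. -/
def EtaOK {V : Type*} (G : SimpleGraph V) (H : Set V) (η : Set V → V) : Prop :=
  (∀ D ∈ Dinf G H, η D ∈ nbhdOf G D) ∧
  (∀ D ∈ Dinf G H, ∀ a ∈ nbhdOf G D,
    ∃ D' ∈ Dinf G H, nbhdOf G D' = nbhdOf G D ∧ η D' = a)

open Classical in
/-- The contraction map `ρ` onto the vertex set of the dominated torso: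
vertices of `H` are kept, each `D ∈ 𝒟′` is contracted to the new vertex
`Sum.inr D`, and each `D ∈ 𝒟″` is contracted onto `η D ∈ N_G(D)`. -/
noncomputable def rho {V : Type*} (G : SimpleGraph V) (H : Set V) (η : Set V → V) :
    V → V ⊕ Set V := fun u =>
  if u ∈ H then Sum.inl u
  else if compOf G H u ∈ Dfin G H then Sum.inr (compOf G H u)
  else Sum.inl (η (compOf G H u))

/-- The dominated torso `K` of `H` in `G`: the contraction minor of `G`
witnessed by `ρ`. -/
noncomputable def Torso {V : Type*} (G : SimpleGraph V) (H : Set V) (η : Set V → V) :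
    SimpleGraph (V ⊕ Set V) where
  Adj a b := a ≠ b ∧ ∃ u v : V, rho G H η u = a ∧ rho G H η v = b ∧ G.Adj u v
  symm := by
    constructor
    rintro a b ⟨hne, u, v, hu, hv, huv⟩
    exact ⟨hne.symm, v, u, hv, hu, huv.symm⟩
  loopless := by constructor; rintro a ⟨hne, -⟩; exact hne rfl

/-- The vertex set of the dominated torso. -/
def torsoVerts {V : Type*} (G : SimpleGraph V) (H : Set V) : Set (V ⊕ Set V) :=
  Sum.inl '' H ∪ Sum.inr '' Dfin G H

/-- A tendril in `G`: a ray with infinitely many vertices in `H`. -/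
def IsTendril {V : Type*} (G : SimpleGraph V) (H : Set V) (f : ℕ → V) : Prop :=
  IsRay G f ∧ {n | f n ∈ H}.Infinite

open Classical in
/-- The `H`-masking of a sequence: vertices outside `H` are replaced by their
component of `G − H`. -/
noncomputable def mask {V : Type*} (G : SimpleGraph V) (H : Set V) : V → V ⊕ Set V :=
  fun u => if u ∈ H then Sum.inl u else Sum.inr (compOf G H u)

/-- The indices of a ray kept by the `K`-projection: vertices of `H`, and the
first index of each maximal run of a component `D ∈ 𝒟′`. -/
def keepIdx {V : Type*} (G : SimpleGraph V) (H : Set V) (f : ℕ → V) (n : ℕ) : Prop :=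
  f n ∈ H ∨
    (f n ∉ H ∧ compOf G H (f n) ∈ Dfin G H ∧
      (n = 0 ∨ mask G H (f (n - 1)) ≠ mask G H (f n)))

/-- The `K`-projection of a tendril: maximal runs of a component `D ∈ 𝒟′` are
replaced by the single vertex `v_D`, and terms in components of `𝒟″` are removed. -/
noncomputable def rayProj {V : Type*} (G : SimpleGraph V) (H : Set V) (η : Set V → V)
    (f : ℕ → V) : ℕ → V ⊕ Set V :=
  fun m => rho G H η (f (Nat.nth (keepIdx G H f) m))

/-- `D̂′`: components of `𝒟′` whose contracted vertex lies in `F`. -/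
def DhatFin {V : Type*} (G : SimpleGraph V) (H : Set V) (F : Set (V ⊕ Set V)) :
    Set (Set V) :=
  {D | D ∈ Dfin G H ∧ Sum.inr D ∈ F}

/-- `D̂″`: components `D ∈ 𝒟″` such that some term of the `H`-masking of the
tendril equals `D` and the next vertex of the tendril lies in `F`. -/
def DhatInf {V : Type*} (G : SimpleGraph V) (H : Set V) (f : ℕ → V)
    (F : Set (V ⊕ Set V)) : Set (Set V) :=
  {D | D ∈ Dinf G H ∧ ∃ n : ℕ, f n ∉ H ∧ compOf G H (f n) = D ∧ Sum.inl (f (n + 1)) ∈ F}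

/-- The `S`-modification `F_S` of a set `F ⊆ V(K)`. -/
def Smod {V : Type*} (G : SimpleGraph V) (H : Set V) (f : ℕ → V)
    (F : Set (V ⊕ Set V)) : Set V :=
  (Sum.inl ⁻¹' F ∩ H) ∪ ⋃ D ∈ DhatFin G H F ∪ DhatInf G H f F, nbhdOf G D

open Classical in
/-- The `K`-projection of a finite sequence of vertices: apply the `H`-masking,
collapse maximal runs of identical consecutive terms, and delete all terms lying
in components of `𝒟″`. -/
noncomputable def projList {V : Type*} (G : SimpleGraph V) (H : Set V)
    (l : List V) : List (V ⊕ Set V) :=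
  ((l.map (mask G H)).destutter (· ≠ ·)).filter
    (fun w => decide (¬ ∃ D ∈ Dinf G H, w = Sum.inr D))

/-!
Follow the path while remembering the current term of the collapsed `H`-masking. Consecutive
kept terms are adjacent in `K`: an edge of `G` inside `H` stays an edge, an edge between `H`
and a component `D ∈ 𝒟′` becomes an edge to `v_D`, and when the path runs through a deleted
component `D ∈ 𝒟″` it enters from and leaves to two vertices of `N_G(D)`. These are distinct
because `P` is a path, and adjacent in `K` because `η` maps the components with adhesion set
`N_G(D)` onto `N_G(D)`: some such component is contracted onto the exit vertex, and it is
adjacent in `G` to the entry vertex.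
-/

open SimpleGraph

section

variable {V : Type*} {G : SimpleGraph V} {H : Set V}

lemma ReachOutside.symm {u v : V} (h : ReachOutside G H u v) : ReachOutside G H v u := by
  obtain ⟨p, hp⟩ := h
  exact ⟨p.reverse, by simpa using hp⟩

lemma ReachOutside.trans {u v w : V} (h : ReachOutside G H u v)
    (h' : ReachOutside G H v w) : ReachOutside G H u w := by
  obtain ⟨p, hp⟩ := h
  obtain ⟨q, hq⟩ := h'
  refine ⟨p.append q, fun x hx => ?_⟩
  rw [Walk.mem_support_append_iff] at hx
  exact hx.elim (hp x) (hq x)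

lemma mem_compOf {u : V} (hu : u ∉ H) : u ∈ compOf G H u :=
  ⟨hu, Walk.nil, by simpa using hu⟩

lemma isComp_compOf {u : V} (hu : u ∉ H) : IsComp G H (compOf G H u) :=
  ⟨⟨u, mem_compOf hu⟩, fun _ hd _ =>
    ⟨fun hv => ⟨hv.1, hd.2.symm.trans hv.2⟩, fun hv => ⟨hv.1, hd.2.trans hv.2⟩⟩⟩

lemma compOf_mem_Dfin_or_Dinf {u : V} (hu : u ∉ H) :
    compOf G H u ∈ Dfin G H ∨ compOf G H u ∈ Dinf G H := by
  by_cases hf : {D' | IsComp G H D' ∧ nbhdOf G D' = nbhdOf G (compOf G H u)}.Finite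
  · exact Or.inl ⟨isComp_compOf hu, hf⟩
  · exact Or.inr ⟨isComp_compOf hu, hf⟩

lemma notMem_Dinf_of_mem_Dfin {D : Set V} (h : D ∈ Dfin G H) : D ∉ Dinf G H :=
  fun h' => h'.2 h.2

namespace IsComp

variable {D : Set V} {d : V}

lemma notMem (hD : IsComp G H D) (hd : d ∈ D) : d ∉ H :=
  ((hD.2 d hd d).mp hd).1

lemma compOf_eq (hD : IsComp G H D) (hd : d ∈ D) : compOf G H d = D :=
  Set.ext fun v => (hD.2 d hd v).symm

lemma mem_of_adj (hD : IsComp G H D) (hd : d ∈ D) {c : V} (hdc : G.Adj d c) (hc : c ∉ H) :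
    c ∈ D := by
  refine (hD.2 d hd c).mpr ⟨hc, hdc.toWalk, ?_⟩
  simpa [Walk.support_cons] using ⟨hD.notMem hd, hc⟩

lemma mem_nbhdOf_of_adj (hD : IsComp G H D) (hd : d ∈ D) {c : V} (hdc : G.Adj d c)
    (hc : c ∈ H) : c ∈ nbhdOf G D :=
  ⟨fun hcD => hD.notMem hcD hc, d, hd, hdc.symm⟩

lemma mask_eq (hD : IsComp G H D) (hd : d ∈ D) : mask G H d = Sum.inr D := by
  simp [mask, hD.notMem hd, hD.compOf_eq hd]

end IsComp

lemma mask_of_mem {u : V} (hu : u ∈ H) : mask G H u = Sum.inl u := by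
  simp [mask, hu]

lemma mask_of_notMem {u : V} (hu : u ∉ H) : mask G H u = Sum.inr (compOf G H u) := by
  simp [mask, hu]

section Torso

variable {η : Set V → V}

lemma rho_of_mem {u : V} (hu : u ∈ H) : rho G H η u = Sum.inl u := by
  simp [rho, hu]

lemma rho_of_mem_Dfin {D : Set V} (hD : D ∈ Dfin G H) {d : V} (hd : d ∈ D) :
    rho G H η d = Sum.inr D := by
  simp [rho, hD.1.notMem hd, hD.1.compOf_eq hd, hD]

lemma rho_of_mem_Dinf {D : Set V} (hD : D ∈ Dinf G H) {d : V} (hd : d ∈ D) :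
    rho G H η d = Sum.inl (η D) := by
  have hD' : D ∉ Dfin G H := fun h => notMem_Dinf_of_mem_Dfin h hD
  simp [rho, hD.1.notMem hd, hD.1.compOf_eq hd, hD']

lemma torso_adj_rho {u v : V} (huv : G.Adj u v) (hne : rho G H η u ≠ rho G H η v) :
    (Torso G H η).Adj (rho G H η u) (rho G H η v) :=
  ⟨hne, u, v, rfl, rfl, huv⟩

lemma torso_adj_inl_inl {a b : V} (ha : a ∈ H) (hb : b ∈ H) (hab : G.Adj a b) :
    (Torso G H η).Adj (Sum.inl a) (Sum.inl b) := by
  rw [← rho_of_mem ha, ← rho_of_mem hb]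
  exact torso_adj_rho hab (by simpa [rho_of_mem ha, rho_of_mem hb] using hab.ne)

lemma torso_adj_inl_inr {a : V} (ha : a ∈ H) {D : Set V} (hD : D ∈ Dfin G H)
    (haD : a ∈ nbhdOf G D) : (Torso G H η).Adj (Sum.inl a) (Sum.inr D) := by
  obtain ⟨-, d, hd, had⟩ := haD
  rw [← rho_of_mem ha, ← rho_of_mem_Dfin hD hd]
  exact torso_adj_rho had (by simp [rho_of_mem ha, rho_of_mem_Dfin hD hd])

lemma torso_adj_of_mem_nbhdOf_Dinf (hη : EtaOK G H η) {D : Set V} (hD : D ∈ Dinf G H)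
    {a b : V} (ha : a ∈ H) (hab : a ≠ b) (haD : a ∈ nbhdOf G D) (hbD : b ∈ nbhdOf G D) :
    (Torso G H η).Adj (Sum.inl a) (Sum.inl b) := by
  obtain ⟨D', hD', hN, rfl⟩ := hη.2 D hD b hbD
  obtain ⟨-, d, hd, had⟩ := hN ▸ haD
  rw [← rho_of_mem ha, ← rho_of_mem_Dinf hD' hd]
  exact torso_adj_rho had (by simpa [rho_of_mem ha, rho_of_mem_Dinf hD' hd] using hab)

end Torso

section Projection

open Classical

variable (G H)

noncomputable def projListFrom (x : V ⊕ Set V) (l : List V) : List (V ⊕ Set V) :=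
  ((l.map (mask G H)).destutter' (· ≠ ·) x).filter
    (fun w => decide (¬ ∃ D ∈ Dinf G H, w = Sum.inr D))

lemma projList_cons (u : V) (l : List V) :
    projList G H (u :: l) = projListFrom G H (mask G H u) l := by
  simp [projList, projListFrom, List.destutter_cons']

variable {G H}

lemma projListFrom_nil_of_mem_Dinf {D : Set V} (hD : D ∈ Dinf G H) :
    projListFrom G H (Sum.inr D) [] = [] := by
  simp [projListFrom, List.destutter'_nil, hD]

lemma projListFrom_cons_of_eq {x : V ⊕ Set V} {b : V} (h : x = mask G H b) (l : List V) :
    projListFrom G H x (b :: l) = projListFrom G H x l := by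
  simp only [projListFrom, List.map_cons]
  rw [List.destutter'_cons_neg _ (by simp [h])]

lemma projListFrom_cons_of_ne {x : V ⊕ Set V} {b : V} (h : x ≠ mask G H b)
    (hx : ¬ ∃ D ∈ Dinf G H, x = Sum.inr D) (l : List V) :
    projListFrom G H x (b :: l) = x :: projListFrom G H (mask G H b) l := by
  simp only [projListFrom, List.map_cons]
  rw [List.destutter'_cons_pos _ h, List.filter_cons]
  simp [hx]

lemma projListFrom_cons_of_ne_of_mem_Dinf {D : Set V} (hD : D ∈ Dinf G H) {b : V}
    (h : Sum.inr D ≠ mask G H b) (l : List V) :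
    projListFrom G H (Sum.inr D) (b :: l) = projListFrom G H (mask G H b) l := by
  simp only [projListFrom, List.map_cons]
  rw [List.destutter'_cons_pos _ h, List.filter_cons]
  simp [hD]

lemma head?_projListFrom {x : V ⊕ Set V} (hx : ¬ ∃ D ∈ Dinf G H, x = Sum.inr D)
    (l : List V) :
    (projListFrom G H x l).head? = some x := by
  induction l with
  | nil => simp [projListFrom, List.destutter'_nil, hx]
  | cons b l ih =>
    by_cases h : x = mask G H b
    · rwa [projListFrom_cons_of_eq h]
    · rw [projListFrom_cons_of_ne h hx, List.head?_cons]

end Projection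

variable {η : Set V → V}

lemma torso_adj_head?_projListFrom_of_mem_Dinf (hη : EtaOK G H η) {D : Set V}
    (hD : D ∈ Dinf G H) {a : V} (ha : a ∈ H) (haD : a ∈ nbhdOf G D) :
    ∀ (l : List V) {b : V}, b ∈ D → (b :: l).IsChain G.Adj → a ∉ l →
      ∀ y ∈ (projListFrom G H (Sum.inr D) l).head?, (Torso G H η).Adj (Sum.inl a) y
  | [], _, _, _, _ => by simp [projListFrom_nil_of_mem_Dinf hD]
  | c :: l, b, hb, hbl, hal => by
    obtain ⟨hbc, hcl⟩ := List.isChain_cons_cons.mp hbl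
    by_cases hc : c ∈ H
    · rw [projListFrom_cons_of_ne_of_mem_Dinf hD (by simp [mask_of_mem hc]), mask_of_mem hc,
        head?_projListFrom (by simp)]
      rintro y ⟨⟩
      have hac : a ≠ c := fun h => hal (h ▸ List.mem_cons_self)
      exact torso_adj_of_mem_nbhdOf_Dinf hη hD ha hac haD (hD.1.mem_nbhdOf_of_adj hb hbc hc)
    · have hcD : c ∈ D := hD.1.mem_of_adj hb hbc hc
      rw [projListFrom_cons_of_eq (hD.1.mask_eq hcD).symm]
      exact torso_adj_head?_projListFrom_of_mem_Dinf hη hD ha haD l hcD hcl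
        fun h => hal (List.mem_cons_of_mem c h)

lemma torso_adj_head?_projListFrom (hη : EtaOK G H η) {a b : V} (ha : a ∈ H) (hab : G.Adj a b)
    {l : List V} (hbl : (b :: l).IsChain G.Adj) (hal : a ∉ l) :
    ∀ y ∈ (projListFrom G H (mask G H b) l).head?, (Torso G H η).Adj (Sum.inl a) y := by
  by_cases hb : b ∈ H
  · rw [mask_of_mem hb, head?_projListFrom (by simp)]
    rintro y ⟨⟩
    exact torso_adj_inl_inl ha hb hab
  have haD : a ∈ nbhdOf G (compOf G H b) :=
    (isComp_compOf hb).mem_nbhdOf_of_adj (mem_compOf hb) hab.symm ha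
  rw [mask_of_notMem hb]
  rcases compOf_mem_Dfin_or_Dinf hb with hD | hD
  · rw [head?_projListFrom (by simpa using notMem_Dinf_of_mem_Dfin hD)]
    rintro y ⟨⟩
    exact torso_adj_inl_inr ha hD haD
  · exact torso_adj_head?_projListFrom_of_mem_Dinf hη hD ha haD l (mem_compOf hb) hbl hal

lemma isChain_projListFrom (hη : EtaOK G H η) :
    ∀ (l : List V) (u : V), (u :: l).IsChain G.Adj → (u :: l).Nodup →
      (projListFrom G H (mask G H u) l).IsChain (Torso G H η).Adj
  | [], _, _, _ => by
    simp only [projListFrom, List.map_nil, List.destutter'_nil, List.filter_cons, List.filter_nil]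
    split <;> simp
  | b :: l, u, hul, hnd => by
    obtain ⟨hub, hbl⟩ := List.isChain_cons_cons.mp hul
    have ih := isChain_projListFrom hη l b hbl hnd.of_cons
    by_cases hm : mask G H u = mask G H b
    · rwa [projListFrom_cons_of_eq hm, hm]
    by_cases hu : u ∈ H
    · have hul' : u ∉ l := fun h => (List.nodup_cons.mp hnd).1 (List.mem_cons_of_mem b h)
      rw [projListFrom_cons_of_ne hm (by simp [mask_of_mem hu]), mask_of_mem hu]
      exact ih.cons (torso_adj_head?_projListFrom hη hu hub hbl hul')
    have hC := isComp_compOf (G := G) hu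
    have hb : b ∈ H := by
      by_contra hb
      have hbC := hC.mem_of_adj (mem_compOf hu) hub hb
      exact hm (by rw [hC.mask_eq (mem_compOf hu), hC.mask_eq hbC])
    rw [mask_of_notMem hu] at hm ⊢
    rcases compOf_mem_Dfin_or_Dinf hu with hD | hD
    · rw [projListFrom_cons_of_ne hm (by simpa using notMem_Dinf_of_mem_Dfin hD)]
      rw [mask_of_mem hb] at ih ⊢
      refine ih.cons ?_
      rw [head?_projListFrom (by simp)]
      rintro y ⟨⟩
      exact (torso_adj_inl_inr hb hD (hC.mem_nbhdOf_of_adj (mem_compOf hu) hub hb)).symm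
    · rwa [projListFrom_cons_of_ne_of_mem_Dinf hD hm]

end

theorem projList_walk_general {V : Type*} (G : SimpleGraph V) (H : Set V) (η : Set V → V)
    (hη : EtaOK G H η)
    {u₀ v : V} (p : G.Walk u₀ v) (hp : p.IsPath) (hu₀ : u₀ ∈ H) :
    List.Chain' (Torso G H η).Adj (projList G H p.support) ∧
      (projList G H p.support).head? = some (Sum.inl u₀) := by
  have hchain := p.isChain_adj_support
  have hnodup := hp.support_nodup
  rw [← p.cons_tail_support] at hchain hnodup ⊢
  rw [projList_cons]
  refine ⟨isChain_projListFrom hη _ _ hchain hnodup, ?_⟩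
  rw [mask_of_mem hu₀, head?_projListFrom (by simp)]

/-- The `K`-projection of a path in `G` starting at a vertex `u₀ ∈ V(H)` is a
walk in the dominated torso `K` starting at `u₀`. -/
theorem projList_walk {V : Type*} (G : SimpleGraph V) (H : Set V) (η : Set V → V)
    (hadh : FiniteAdhesion G H) (hη : EtaOK G H η)
    {u₀ v : V} (p : G.Walk u₀ v) (hp : p.IsPath) (hu₀ : u₀ ∈ H) :
    List.Chain' (Torso G H η).Adj (projList G H p.support) ∧
      (projList G H p.support).head? = some (Sum.inl u₀) :=
  projList_walk_general G H η hη p hp hu₀
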